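/- Let X and P be types, F a finite type of semantic functions, sem : P → F a map assigning to each program the function it computes, τ : F → X → Prop, and define the specification σ p x := τ (sem p) x (the specification depends on a program only through the function it computes). Suppose I : ℕ → Finset X, p : ℕ → P, x : ℕ → X, and m : ℕ satisfy, for every k < m: ∀ y ∈ I k, σ (p k) y; ¬ σ (p k) (x k); and I (k+1) = insert (x k) (I k). Then the map k ↦ sem (p k) is injective on Fin m (each iteration of the CEGIS loop distinguishes at least one incorrect function from the candidate space), and consequently m ≤ Fintype.card F. -/
import Mathlib


theorem cegis_distinguishes_functions
    (X P : Type*) (F : Type*) [Fintype F]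
    (sem : P → F) (τ : F → X → Prop)
    (σ : P → X → Prop) (hσ : ∀ p x, σ p x ↔ τ (sem p) x)
    [DecidableEq X]
    (I : ℕ → Finset X) (p : ℕ → P) (x : ℕ → X) (m : ℕ)
    (hsynth : ∀ k < m, ∀ y ∈ I k, σ (p k) y)
    (hcex : ∀ k < m, ¬ σ (p k) (x k))
    (hins : ∀ k < m, I (k + 1) = insert (x k) (I k)) :
    Function.Injective (fun k : Fin m => sem (p k)) ∧ m ≤ Fintype.card F := by
  have hmem : ∀ i j, i < j → j < m → x i ∈ I j := by
    intro i j hij hjm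
    induction j with
    | zero => omega
    | succ n ih =>
      rw [hins n (by omega)]
      rcases Nat.lt_succ_iff_lt_or_eq.mp hij with h | h
      · exact Finset.mem_insert_of_mem (ih h (by omega))
      · subst h; exact Finset.mem_insert_self _ _
  have key : ∀ a b : Fin m, (a : ℕ) < b → sem (p a) ≠ sem (p b) := by
    intro a b h hab
    have h1 : σ (p b) (x a) := hsynth b b.2 _ (hmem a b h b.2)
    have h2 : ¬ σ (p a) (x a) := hcex a a.2
    rw [hσ] at h1 h2
    rw [hab] at h2
    exact h2 h1
  have hinj : Function.Injective (fun k : Fin m => sem (p k)) := by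
    intro a b hab
    simp only at hab
    rcases lt_trichotomy (a : ℕ) (b : ℕ) with h | h | h
    · exact absurd hab (key a b h)
    · exact Fin.ext h
    · exact absurd hab.symm (key b a h)
  exact ⟨hinj, by simpa using Fintype.card_le_of_injective _ hinj⟩
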